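/- arXiv:2406.17410 — 2 statements merged into one kernel-verified Lean document; each statement's English description precedes it below -/
import Mathlib

section
/- Let u be a solution of the traveling-wave problem with speed c ∈ ℝ. Then the function ζ ↦ g(u(ζ)) is integrable over ℝ and c + H(1) = ∫_{−∞}^{+∞} g(u(ζ)) dζ > 0; in particular, a necessary condition for the existence of a solution is c > −H(1). -/
open Set MeasureTheory Filter

/-- The conjugate exponent `p' = p/(p-1)`. -/
noncomputable def pconj (p : ℝ) : ℝ := p / (p - 1)

/-- The constant `k(p)` from the paper. -/
noncomputable def kfun (p : ℝ) : ℝ :=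
  if p < 2 then 1 / (2 ^ (pconj p - 1) - 1)
  else if p = 2 then 1
  else pconj p / (pconj p - 1 +
    (1 + pconj p * (pconj p - 1) ^ ((1 : ℝ) / (pconj p - 2)) +
      (pconj p - 1) ^ (pconj p / (pconj p - 2))) /
    (1 + (pconj p - 1) ^ ((1 : ℝ) / (pconj p - 2))) ^ pconj p)

/-- Standing assumptions on the data `p, θ, D, H, h, g` (combustion setting). -/
structure CombSetup (p θ : ℝ) (D H h g : ℝ → ℝ) : Prop where
  hp : 1 < p
  hθ0 : 0 < θ
  hθ1 : θ < 1
  hD : ContDiffOn ℝ 1 D (Ioo 0 1)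
  hDpos : ∀ v ∈ Ioo (0 : ℝ) 1, 0 < D v
  hH : ContDiffOn ℝ 1 H (Icc 0 1)
  hH0 : H 0 = 0
  hh : ContinuousOn h (Icc 0 1)
  hHd : ∀ v ∈ Icc (0 : ℝ) 1, HasDerivWithinAt H (h v) (Icc 0 1) v
  hgc : ContinuousOn g (Icc 0 1)
  hg0 : ∀ v ∈ Icc (0 : ℝ) θ, g v = 0
  hgpos : ∀ v ∈ Ioo θ 1, 0 < g v
  hg1 : g 1 = 0
  hInt : IntegrableOn (fun v => D v ^ (pconj p - 1) * g v) (Ioo 0 1)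

/-- The diffusive flux `ξ ↦ D(u(ξ)) |u'(ξ)|^{p-2} u'(ξ)`. -/
noncomputable def flux (p : ℝ) (D u : ℝ → ℝ) : ℝ → ℝ :=
  fun ξ => D (u ξ) * (|deriv u ξ| ^ (p - 2) * deriv u ξ)

/-- Solution of the traveling-wave problem with speed `c`. -/
structure IsTWSol (p c : ℝ) (D h g : ℝ → ℝ) (u : ℝ → ℝ) : Prop where
  cont : Continuous u
  mem : ∀ ξ, u ξ ∈ Icc (0 : ℝ) 1
  smooth : ContDiffOn ℝ 1 u {ξ | u ξ ∈ Ioo (0 : ℝ) 1}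
  eqn : ∀ ξ ∈ {ξ | u ξ ∈ Ioo (0 : ℝ) 1},
    HasDerivAt (flux p D u) (-(c + h (u ξ)) * deriv u ξ - g (u ξ)) ξ
  flux_cont : Continuous (fun ξ => if u ξ ∈ Ioo (0 : ℝ) 1 then flux p D u ξ else 0)
  flux_to0 : ∀ ε > 0, ∃ δ > 0, ∀ ξ, u ξ ∈ Ioo (0 : ℝ) 1 → u ξ < δ → |flux p D u ξ| < ε
  flux_to1 : ∀ ε > 0, ∃ δ > 0, ∀ ξ, u ξ ∈ Ioo (0 : ℝ) 1 → 1 - δ < u ξ → |flux p D u ξ| < ε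
  lim_bot : Tendsto u atBot (nhds 1)
  lim_top : Tendsto u atTop (nhds 0)

/-- Positive solution of the first-order problem with parameter `c`. -/
structure IsFOSol (p c : ℝ) (D h g : ℝ → ℝ) (y : ℝ → ℝ) : Prop where
  cont : ContinuousOn y (Icc 0 1)
  eqn : ∀ v ∈ Ioo (0 : ℝ) 1, HasDerivAt y
    (pconj p * ((c + h v) * (max (y v) 0) ^ (1 / p) - D v ^ (pconj p - 1) * g v)) v
  y0 : y 0 = 0
  y1 : y 1 = 0
  pos : ∀ v ∈ Ioo (0 : ℝ) 1, 0 < y v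

/-!
Integrating the equation once: the energy `E = F + c u + H(u)`, where `F` is the flux extended
by `0` off `I_u`, satisfies `E' = -g(u) ≤ 0` on `I_u`, takes only the values `0` and `c + H(1)`
off `I_u`, and tends to `c + H(1)` at `-∞` and to `0` at `+∞`. Since `E` misses a dense set of
values off `I_u`, it is antitone. Hence `E` can fail to have derivative `-g(u)` only at the last
point where `E = c + H(1)` and the first point where `E = 0`, and the fundamental theorem of
calculus with countably many exceptional points gives `∫_x^y g(u) = E(x) - E(y)`. Letting
`x → -∞`, `y → +∞` gives `c + H(1) = ∫ g(u)`, which is positive because `u` takes a value in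
`(θ, 1)`, where `g > 0`.
-/

open Topology

theorem antitone_of_hasDerivAt_nonpos_of_countable_image {G φ : ℝ → ℝ} {I : Set ℝ}
    (hG : Continuous G) (hI : IsOpen I) (hd : ∀ x ∈ I, HasDerivAt G (φ x) x)
    (hφ : ∀ x ∈ I, φ x ≤ 0) (hK : (G '' Iᶜ).Countable) : Antitone G := by
  intro x y hxy
  by_contra! hlt
  obtain ⟨v, hvK, hv⟩ := (hK.dense_compl ℝ).exists_mem_open isOpen_Ioo (nonempty_Ioo.2 hlt)
  set S := Icc x y ∩ {t | G t ≤ v}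
  have hS : IsCompact S := isCompact_Icc.inter_right (isClosed_le hG continuous_const)
  have ht₀ : sSup S ∈ S := hS.sSup_mem ⟨x, ⟨le_rfl, hxy⟩, hv.1.le⟩
  set t₀ := sSup S
  have ht₀y : t₀ < y := ht₀.1.2.lt_of_ne fun h => (hv.2.trans_le (h ▸ ht₀.2)).false
  have hgt : ∀ t ∈ Ioc t₀ y, v < G t := fun t ht => not_le.1 fun hle =>
    ht.1.not_ge (le_csSup hS.bddAbove ⟨⟨ht₀.1.1.trans ht.1.le, ht.2⟩, hle⟩)
  have hGt₀ : G t₀ = v := by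
    refine le_antisymm ht₀.2 (ge_of_tendsto (hG.continuousAt.tendsto.mono_left
      (nhdsWithin_le_nhds (s := Ioi t₀))) ?_)
    filter_upwards [Ioo_mem_nhdsGT ht₀y] with t ht using (hgt t ⟨ht.1, ht.2.le⟩).le
  -- `v` avoids the values of `G` off `I`, so `G` is differentiable, hence antitone, near `t₀`.
  have ht₀I : t₀ ∈ I := by_contra fun h => hvK ⟨t₀, h, hGt₀⟩
  obtain ⟨ε, hε, hball⟩ := Metric.isOpen_iff.1 hI t₀ ht₀I
  have hanti : AntitoneOn G (Metric.ball t₀ ε) := by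
    refine antitoneOn_of_hasDerivWithinAt_nonpos (convex_ball t₀ ε) hG.continuousOn
      (fun t ht => (hd t (hball (interior_subset ht))).hasDerivWithinAt)
      (fun t ht => hφ t (hball (interior_subset ht)))
  set t := min (t₀ + ε / 2) y
  have htt₀ : t₀ < t := lt_min (by linarith) ht₀y
  have htball : t ∈ Metric.ball t₀ ε := by
    rw [Metric.mem_ball, Real.dist_eq, abs_of_pos (sub_pos.2 htt₀)]
    linarith [min_le_left (t₀ + ε / 2) y]
  have := hanti (Metric.mem_ball_self hε) htball htt₀.le
  linarith [hgt t ⟨htt₀, min_le_right _ _⟩]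

theorem countable_setOf_not_hasDerivAt_of_antitone {G φ : ℝ → ℝ} {I : Set ℝ} {m M : ℝ}
    (hanti : Antitone G) (hm : ∀ t, m ≤ G t) (hM : ∀ t, G t ≤ M)
    (hd : ∀ t ∈ I, HasDerivAt G (φ t) t) (hoff : ∀ t ∉ I, φ t = 0 ∧ (G t = m ∨ G t = M)) :
    {t | ¬HasDerivAt G (φ t) t}.Countable := by
  set E := {t | ¬HasDerivAt G (φ t) t}
  have hE : ∀ t ∈ E, φ t = 0 ∧ (G t = m ∨ G t = M) := fun t ht =>
    hoff t fun htI => ht (hd t htI)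
  have hconst : ∀ t ∈ E, ∀ c, ¬G =ᶠ[𝓝 t] fun _ => c := fun t ht c hc =>
    ht ((hE t ht).1 ▸ (hasDerivAt_const t c).congr_of_eventuallyEq hc)
  -- `G` is constant on `[s, ∞)` if `G s = m`, and on `(-∞, s]` if `G s = M`.
  have hinj : InjOn G E := by
    suffices ∀ s ∈ E, ∀ t ∈ E, s < t → G s ≠ G t by
      intro s hs t ht hst
      by_contra hne
      rcases lt_or_gt_of_ne hne with h | h
      exacts [this s hs t ht h hst, this t ht s hs h hst.symm]
    intro s hs t ht hst hGst
    rcases (hE s hs).2 with h | h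
    · refine hconst t ht m ?_
      filter_upwards [Ioi_mem_nhds hst] with r hr using le_antisymm (h ▸ hanti hr.le) (hm r)
    · refine hconst s hs M ?_
      filter_upwards [Iio_mem_nhds hst] with r hr
      exact le_antisymm (hM r) (h ▸ hGst ▸ hanti hr.le)
  refine (Finite.of_finite_image ?_ hinj).countable
  exact (toFinite {m, M}).subset (image_subset_iff.2 fun t ht => (hE t ht).2)

theorem integrable_and_integral_eq_of_intervalIntegral_eq_sub {φ G : ℝ → ℝ} {A B : ℝ}
    (hφc : Continuous φ) (hφ : 0 ≤ φ) (hG : ∀ x y, x ≤ y → ∫ t in x..y, φ t = G x - G y)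
    (hbot : Tendsto G atBot (𝓝 A)) (htop : Tendsto G atTop (𝓝 B)) :
    Integrable φ ∧ ∫ t, φ t = A - B := by
  have hcover := aecover_Ioc (μ := (volume : Measure ℝ)) tendsto_neg_atTop_atBot tendsto_id
  have hlim : Tendsto (fun r => ∫ t in Ioc (-r) (id r), φ t) atTop (𝓝 (A - B)) := by
    refine ((hbot.comp tendsto_neg_atTop_atBot).sub htop).congr' ?_
    filter_upwards [eventually_ge_atTop 0] with r hr
    rw [id, ← intervalIntegral.integral_of_le (by linarith), hG _ _ (by linarith)]
    rfl
  have hφi : ∀ r, IntegrableOn φ (Ioc (-r) (id r)) := fun r => hφc.integrableOn_Ioc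
  exact ⟨hcover.integrable_of_integral_tendsto_of_nonneg_ae _ hφi (ae_of_all _ hφ) hlim,
    hcover.integral_eq_of_tendsto_of_nonneg_ae _ (ae_of_all _ hφ) hφi hlim⟩

theorem eq_zero_or_eq_one_of_notMem_Ioo {v : ℝ} (hv : v ∈ Icc (0 : ℝ) 1)
    (hv' : v ∉ Ioo (0 : ℝ) 1) : v = 0 ∨ v = 1 := by
  have : v ∈ Icc (0 : ℝ) 1 \ Ioo 0 1 := ⟨hv, hv'⟩
  rwa [Icc_sdiff_Ioo_same zero_le_one, mem_insert_iff, mem_singleton_iff] at this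

noncomputable def fluxExt (p : ℝ) (D u : ℝ → ℝ) (ξ : ℝ) : ℝ :=
  if u ξ ∈ Ioo (0 : ℝ) 1 then flux p D u ξ else 0

noncomputable def energy (p c : ℝ) (D H u : ℝ → ℝ) (ξ : ℝ) : ℝ :=
  fluxExt p D u ξ + c * u ξ + H (u ξ)

theorem tendsto_fluxExt_of_eventually {p : ℝ} {D u : ℝ → ℝ} {l : Filter ℝ}
    (hl : ∀ ε > 0, ∀ᶠ ξ in l, u ξ ∈ Ioo (0 : ℝ) 1 → |flux p D u ξ| < ε) :
    Tendsto (fluxExt p D u) l (𝓝 0) :=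
  Metric.tendsto_nhds.2 fun ε hε => (hl ε hε).mono fun ξ hξ => by
    rw [Real.dist_eq, sub_zero, fluxExt]
    split_ifs with h
    exacts [hξ h, by simpa using hε]

namespace CombSetup

variable {p θ : ℝ} {D H h g : ℝ → ℝ}

theorem g_eq_zero_of_notMem_Ioo (S : CombSetup p θ D H h g) {v : ℝ} (hv : v ∈ Icc (0 : ℝ) 1)
    (hv' : v ∉ Ioo (0 : ℝ) 1) : g v = 0 := by
  rcases eq_zero_or_eq_one_of_notMem_Ioo hv hv' with rfl | rfl
  exacts [S.hg0 0 ⟨le_rfl, S.hθ0.le⟩, S.hg1]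

theorem g_nonneg (S : CombSetup p θ D H h g) {v : ℝ} (hv : v ∈ Icc (0 : ℝ) 1) : 0 ≤ g v := by
  by_cases hv' : v ∈ Ioo θ 1
  · exact (S.hgpos v hv').le
  · by_cases hvθ : v ≤ θ
    · exact (S.hg0 v ⟨hv.1, hvθ⟩).ge
    · exact (S.g_eq_zero_of_notMem_Ioo hv fun h => hv' ⟨not_le.1 hvθ, h.2⟩).ge

end CombSetup

namespace IsTWSol

variable {p θ c : ℝ} {D H h g u : ℝ → ℝ}

theorem continuous_energy (hu : IsTWSol p c D h g u) (hH : ContinuousOn H (Icc 0 1)) :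
    Continuous (energy p c D H u) :=
  (hu.flux_cont.add (continuous_const.mul hu.cont)).add (hH.comp_continuous hu.cont hu.mem)

theorem energy_eq_of_notMem_Ioo (hu : IsTWSol p c D h g u) (hH0 : H 0 = 0) {ξ : ℝ}
    (hξ : u ξ ∉ Ioo (0 : ℝ) 1) : energy p c D H u ξ = 0 ∨ energy p c D H u ξ = c + H 1 := by
  simp only [energy, fluxExt, if_neg hξ]
  rcases eq_zero_or_eq_one_of_notMem_Ioo (hu.mem ξ) hξ with h | h <;> rw [h]
  exacts [Or.inl (by rw [hH0]; ring), Or.inr (by ring)]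

theorem hasDerivAt_energy (hu : IsTWSol p c D h g u)
    (hHd : ∀ v ∈ Icc (0 : ℝ) 1, HasDerivWithinAt H (h v) (Icc 0 1) v) {ξ : ℝ}
    (hξ : u ξ ∈ Ioo (0 : ℝ) 1) : HasDerivAt (energy p c D H u) (-g (u ξ)) ξ := by
  have hI : {ξ | u ξ ∈ Ioo (0 : ℝ) 1} ∈ 𝓝 ξ := (isOpen_Ioo.preimage hu.cont).mem_nhds hξ
  have hu' : HasDerivAt u (deriv u ξ) ξ :=
    ((hu.smooth.differentiableOn one_ne_zero).differentiableAt hI).hasDerivAt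
  have hflux : HasDerivAt (fluxExt p D u) (-(c + h (u ξ)) * deriv u ξ - g (u ξ)) ξ :=
    (hu.eqn ξ hξ).congr_of_eventuallyEq (Filter.mem_of_superset hI fun t ht => if_pos ht)
  have hHu : HasDerivAt (fun t => H (u t)) (deriv u ξ • h (u ξ)) ξ :=
    (hHd (u ξ) (hu.mem ξ)).scomp_hasDerivAt ξ hu' hu.mem
  refine ((hflux.add (hu'.const_mul c)).add hHu).congr_deriv ?_
  rw [smul_eq_mul]
  ring

theorem tendsto_fluxExt_atBot (hu : IsTWSol p c D h g u) :
    Tendsto (fluxExt p D u) atBot (𝓝 0) := by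
  refine tendsto_fluxExt_of_eventually fun ε hε => ?_
  obtain ⟨δ, hδ, hflux⟩ := hu.flux_to1 ε hε
  filter_upwards [hu.lim_bot.eventually (eventually_gt_nhds (by linarith : 1 - δ < 1))]
    with ξ hξ hI using hflux ξ hI hξ

theorem tendsto_fluxExt_atTop (hu : IsTWSol p c D h g u) :
    Tendsto (fluxExt p D u) atTop (𝓝 0) := by
  refine tendsto_fluxExt_of_eventually fun ε hε => ?_
  obtain ⟨δ, hδ, hflux⟩ := hu.flux_to0 ε hε
  filter_upwards [hu.lim_top.eventually (eventually_lt_nhds hδ)] with ξ hξ hI using hflux ξ hI hξ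

theorem tendsto_comp_of_continuousOn (hu : IsTWSol p c D h g u) {l : Filter ℝ} {a : ℝ}
    (ha : a ∈ Icc (0 : ℝ) 1) (hlim : Tendsto u l (𝓝 a)) (hH : ContinuousOn H (Icc 0 1)) :
    Tendsto (fun ξ => H (u ξ)) l (𝓝 (H a)) :=
  (hH a ha).tendsto.comp (tendsto_nhdsWithin_iff.2 ⟨hlim, Eventually.of_forall hu.mem⟩)

theorem tendsto_energy_atBot (hu : IsTWSol p c D h g u) (hH : ContinuousOn H (Icc 0 1)) :
    Tendsto (energy p c D H u) atBot (𝓝 (c + H 1)) := by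
  have := (hu.tendsto_fluxExt_atBot.add (hu.lim_bot.const_mul c)).add
    (hu.tendsto_comp_of_continuousOn (right_mem_Icc.2 zero_le_one) hu.lim_bot hH)
  rwa [zero_add, mul_one] at this

theorem tendsto_energy_atTop (hu : IsTWSol p c D h g u) (hH : ContinuousOn H (Icc 0 1))
    (hH0 : H 0 = 0) : Tendsto (energy p c D H u) atTop (𝓝 0) := by
  have := (hu.tendsto_fluxExt_atTop.add (hu.lim_top.const_mul c)).add
    (hu.tendsto_comp_of_continuousOn (left_mem_Icc.2 zero_le_one) hu.lim_top hH)
  rwa [hH0, mul_zero, add_zero, add_zero] at this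

theorem Ioo_subset_range (hu : IsTWSol p c D h g u) : Ioo (0 : ℝ) 1 ⊆ range u := fun _ hv =>
  mem_range_of_exists_le_of_exists_ge hu.cont
    ((hu.lim_top.eventually (eventually_le_nhds hv.1)).exists)
    ((hu.lim_bot.eventually (eventually_ge_nhds hv.2)).exists)

theorem antitone_energy (S : CombSetup p θ D H h g) (hu : IsTWSol p c D h g u) :
    Antitone (energy p c D H u) := by
  refine antitone_of_hasDerivAt_nonpos_of_countable_image (hu.continuous_energy S.hH.continuousOn)
    (isOpen_Ioo.preimage hu.cont) (fun ξ hξ => hu.hasDerivAt_energy S.hHd hξ)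
    (fun ξ _ => neg_nonpos.2 (S.g_nonneg (hu.mem ξ))) ?_
  have hsub : energy p c D H u '' {ξ | u ξ ∈ Ioo 0 1}ᶜ ⊆ {0, c + H 1} :=
    image_subset_iff.2 fun _ hξ => hu.energy_eq_of_notMem_Ioo S.hH0 hξ
  exact ((toFinite _).subset hsub).countable

theorem intervalIntegral_eq_energy_sub (S : CombSetup p θ D H h g) (hu : IsTWSol p c D h g u)
    {x y : ℝ} (hxy : x ≤ y) :
    ∫ t in x..y, g (u t) = energy p c D H u x - energy p c D H u y := by
  have hanti := hu.antitone_energy S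
  have hmin : ∀ t, 0 ≤ energy p c D H u t := fun t =>
    le_of_tendsto (hu.tendsto_energy_atTop S.hH.continuousOn S.hH0)
      (eventually_atTop.2 ⟨t, fun s hs => hanti hs⟩)
  have hmax : ∀ t, energy p c D H u t ≤ c + H 1 := fun t =>
    ge_of_tendsto (hu.tendsto_energy_atBot S.hH.continuousOn)
      (eventually_atBot.2 ⟨t, fun s hs => hanti hs⟩)
  have hE := countable_setOf_not_hasDerivAt_of_antitone (φ := fun t => -g (u t))
    (I := {ξ | u ξ ∈ Ioo 0 1}) hanti hmin hmax (fun t ht => hu.hasDerivAt_energy S.hHd ht)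
    fun t ht => ⟨by rw [S.g_eq_zero_of_notMem_Ioo (hu.mem t) ht, neg_zero],
      hu.energy_eq_of_notMem_Ioo S.hH0 ht⟩
  have hcont : Continuous fun t => -g (u t) := (S.hgc.comp_continuous hu.cont hu.mem).neg
  have hFTC := integral_eq_of_hasDerivAt_off_countable_of_le _ _ hxy hE
    (hu.continuous_energy S.hH.continuousOn).continuousOn (fun t ht => not_not.1 ht.2)
    (hcont.intervalIntegrable x y)
  rw [intervalIntegral.integral_neg] at hFTC
  linarith

end IsTWSol

/-- Necessary condition `c > -H(1)`.
For any solution `u`, `ζ ↦ g(u(ζ))` is integrable on `ℝ` and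
`c + H(1) = ∫_{ℝ} g(u(ζ)) dζ > 0`; in particular `c > -H(1)`. -/
theorem stmt5 (p θ c : ℝ) (D H h g u : ℝ → ℝ) (S : CombSetup p θ D H h g)
    (hu : IsTWSol p c D h g u) :
    Integrable (fun ζ => g (u ζ)) ∧
    c + H 1 = ∫ ζ : ℝ, g (u ζ) ∧
    0 < ∫ ζ : ℝ, g (u ζ) ∧
    -H 1 < c := by
  have hgu : Continuous fun ζ => g (u ζ) := S.hgc.comp_continuous hu.cont hu.mem
  have hgu_nonneg : 0 ≤ fun ζ => g (u ζ) := fun ζ => S.g_nonneg (hu.mem ζ)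
  obtain ⟨hint, hval⟩ := integrable_and_integral_eq_of_intervalIntegral_eq_sub hgu hgu_nonneg
    (fun x y hxy => hu.intervalIntegral_eq_energy_sub S hxy)
    (hu.tendsto_energy_atBot S.hH.continuousOn) (hu.tendsto_energy_atTop S.hH.continuousOn S.hH0)
  rw [sub_zero] at hval
  have hθ : θ < (θ + 1) / 2 ∧ (θ + 1) / 2 < 1 := by constructor <;> linarith [S.hθ1]
  obtain ⟨ξ, hξ⟩ := hu.Ioo_subset_range ⟨by linarith [S.hθ0], hθ.2⟩
  have hpos : 0 < ∫ ζ, g (u ζ) := integral_pos_of_integrable_nonneg_nonzero (x := ξ) hgu hint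
    hgu_nonneg (by rw [hξ]; exact (S.hgpos _ hθ).ne')
  exact ⟨hint, hval.symm, hpos, by linarith⟩
end

section
/- The function k : (1, +∞) → ℝ is continuous on (1, +∞), and satisfies lim_{p→1+} k(p) = 0 and lim_{p→+∞} k(p) = 1/2. -/
open Set MeasureTheory Filter

/-!
For `p ≤ 2`, `k(p) = 1/(2^(p'-1) - 1)` is continuous, equals `1` at `p = 2`, and tends to `0`
since `p' → ∞` as `p → 1⁺`. For `p > 2` put `q = p' ∈ (1, 2)` and `s = (q-1)^(1/(2-q))`, the
reciprocal of the paper's `(p'-1)^(1/(p'-2))`. Multiplying the inner fraction by `s^q` above and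
below gives `k(p) = q / (q - 1 + (1 + q t + s t) / (1 + s)^q)` with `t = s^(q-1)`.
As `p → 2⁺`, `q → 2⁻` and `log (q-1) / (q-2) → 1`, so `s` and `t` both tend to `e⁻¹`; the
expression equals `1` whenever `q = 2` and `s = t`. As `p → ∞`, `q → 1⁺`, `s → 0` and `t → 1`
(because `x log x → 0`), so `k(p) → 1 / (0 + 2)`.
-/

open Real Topology

lemma pconj_eq_one_add_inv {p : ℝ} (hp : p ≠ 1) : pconj p = 1 + (p - 1)⁻¹ := by
  have : p - 1 ≠ 0 := sub_ne_zero.mpr hp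
  rw [pconj]; field_simp; ring

lemma pconj_two : pconj 2 = 2 := by norm_num [pconj]

lemma one_lt_pconj {p : ℝ} (hp : 1 < p) : 1 < pconj p := by
  rw [pconj_eq_one_add_inv hp.ne']
  have : 0 < (p - 1)⁻¹ := inv_pos.mpr (sub_pos.mpr hp)
  linarith

lemma pconj_lt_two {p : ℝ} (hp : 2 < p) : pconj p < 2 := by
  rw [pconj_eq_one_add_inv (by linarith)]
  have : (p - 1)⁻¹ < 1 := inv_lt_one_of_one_lt₀ (by linarith)
  linarith

lemma continuousAt_pconj {p : ℝ} (hp : p ≠ 1) : ContinuousAt pconj p :=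
  continuousAt_id.div (by fun_prop) (sub_ne_zero.mpr hp)

lemma tendsto_sub_one_nhds_one : Tendsto (fun q : ℝ => q - 1) (𝓝 1) (𝓝 0) := by
  simpa using (tendsto_id (x := 𝓝 (1 : ℝ))).sub_const 1

lemma tendsto_pconj_nhdsGT_one : Tendsto pconj (𝓝[>] 1) atTop := by
  have hsub : Tendsto (fun p : ℝ => p - 1) (𝓝[>] 1) (𝓝[>] 0) :=
    tendsto_nhdsWithin_iff.mpr
      ⟨tendsto_sub_one_nhds_one.mono_left nhdsWithin_le_nhds,
        eventually_mem_nhdsWithin.mono fun p (hp : 1 < p) => sub_pos.mpr hp⟩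
  refine (tendsto_atTop_add_const_left _ 1 (tendsto_inv_nhdsGT_zero.comp hsub)).congr' ?_
  filter_upwards [self_mem_nhdsWithin] with p hp
  exact (pconj_eq_one_add_inv (ne_of_gt hp)).symm

lemma tendsto_pconj_atTop : Tendsto pconj atTop (𝓝[>] 1) := by
  have hlim : Tendsto (fun p : ℝ => 1 + (p - 1)⁻¹) atTop (𝓝 1) := by
    simpa [sub_eq_add_neg] using (tendsto_inv_atTop_zero.comp
      (tendsto_atTop_add_const_right atTop (-1 : ℝ) tendsto_id)).const_add 1
  refine tendsto_nhdsWithin_iff.mpr ⟨hlim.congr' ?_, ?_⟩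
  · filter_upwards [eventually_gt_atTop 1] with p hp
    exact (pconj_eq_one_add_inv (ne_of_gt hp)).symm
  · filter_upwards [eventually_gt_atTop 1] with p hp
    exact one_lt_pconj hp

lemma tendsto_pconj_nhdsGT_two : Tendsto pconj (𝓝[>] 2) (𝓝[<] 2) := by
  have h := (continuousAt_pconj (by norm_num : (2 : ℝ) ≠ 1)).tendsto
  rw [pconj_two] at h
  exact tendsto_nhdsWithin_iff.mpr
    ⟨h.mono_left nhdsWithin_le_nhds, eventually_mem_nhdsWithin.mono fun p hp => pconj_lt_two hp⟩

lemma kfun_of_le_two {p : ℝ} (hp : p ≤ 2) : kfun p = 1 / (2 ^ (pconj p - 1) - 1) := by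
  rcases hp.lt_or_eq with hp | rfl
  · rw [kfun, if_pos hp]
  · norm_num [kfun, pconj_two]

lemma continuousWithinAt_kfun_Iic {p : ℝ} (hp : 1 < p) (hp2 : p ≤ 2) :
    ContinuousWithinAt kfun (Iic 2) p := by
  have hden : (2 : ℝ) ^ (pconj p - 1) - 1 ≠ 0 :=
    sub_ne_zero.mpr (one_lt_rpow one_lt_two (sub_pos.mpr (one_lt_pconj hp))).ne'
  have hcont : ContinuousAt (fun p => 1 / ((2 : ℝ) ^ (pconj p - 1) - 1)) p :=
    continuousAt_const.div
      ((continuousAt_const.rpow ((continuousAt_pconj hp.ne').sub continuousAt_const)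
        (Or.inl two_ne_zero)).sub continuousAt_const) hden
  exact hcont.continuousWithinAt.congr (fun x hx => kfun_of_le_two hx) (kfun_of_le_two hp2)

lemma tendsto_kfun_nhdsGT_one : Tendsto kfun (𝓝[>] 1) (𝓝 0) := by
  have hden : Tendsto (fun p => (2 : ℝ) ^ (pconj p - 1) - 1) (𝓝[>] 1) atTop :=
    tendsto_atTop_add_const_right _ (-1) <| (tendsto_rpow_atTop_of_base_gt_one 2 one_lt_two).comp
      (tendsto_atTop_add_const_right _ (-1) tendsto_pconj_nhdsGT_one)
  refine (hden.inv_tendsto_atTop).congr' ?_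
  filter_upwards [Ioo_mem_nhdsGT one_lt_two] with p hp
  simp only [Pi.inv_apply, kfun_of_le_two hp.2.le, one_div]

/-- `t` stands for `s ^ (q - 1)`. It is a separate variable because `(q, s) ↦ s ^ (q - 1)` is not
continuous at `(1, 0)`, which is where `(q, s)` goes as `p → ∞`. -/
noncomputable def kRight (q s t : ℝ) : ℝ :=
  q / (q - 1 + (1 + q * t + s * t) / (1 + s) ^ q)

lemma kRight_two_self {c : ℝ} (hc : 0 ≤ c) : kRight 2 c c = 1 := by
  rw [kRight, rpow_two, show 1 + 2 * c + c * c = (1 + c) ^ 2 by ring, div_self (by positivity)]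
  norm_num

lemma Filter.Tendsto.kRight {α : Type*} {l : Filter α} {q s t : α → ℝ} {q₀ s₀ t₀ : ℝ}
    (hq : Tendsto q l (𝓝 q₀)) (hs : Tendsto s l (𝓝 s₀)) (ht : Tendsto t l (𝓝 t₀))
    (hq₀ : 1 ≤ q₀) (hs₀ : 0 ≤ s₀) (ht₀ : 0 < t₀) :
    Tendsto (fun x => kRight (q x) (s x) (t x)) l (𝓝 (kRight q₀ s₀ t₀)) := by
  have hden : 0 < q₀ - 1 + (1 + q₀ * t₀ + s₀ * t₀) / (1 + s₀) ^ q₀ := by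
    have : 0 < (1 + q₀ * t₀ + s₀ * t₀) / (1 + s₀) ^ q₀ := by positivity
    linarith
  exact hq.div ((hq.sub_const 1).add (((tendsto_const_nhds.add (hq.mul ht)).add (hs.mul ht)).div
    ((tendsto_const_nhds.add hs).rpow hq (Or.inl (by positivity))) (by positivity))) hden.ne'

lemma eq_kRight_of_one_lt {q : ℝ} (hq : 1 < q) :
    q / (q - 1 + (1 + q * (q - 1) ^ ((1 : ℝ) / (q - 2)) + (q - 1) ^ (q / (q - 2))) /
      (1 + (q - 1) ^ ((1 : ℝ) / (q - 2))) ^ q) =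
    kRight q ((q - 1) ^ (1 / (2 - q))) ((q - 1) ^ ((q - 1) / (2 - q))) := by
  have hx : 0 < q - 1 := sub_pos.mpr hq
  set s := (q - 1) ^ (1 / (2 - q)) with hs_def
  have hs : 0 < s := rpow_pos_of_pos hx _
  have hneg : q - 2 = -(2 - q) := by ring
  have hr : (q - 1) ^ ((1 : ℝ) / (q - 2)) = s⁻¹ := by
    rw [hs_def, ← rpow_neg hx.le, hneg, div_neg]
  have hrq : (q - 1) ^ (q / (q - 2)) = (s ^ q)⁻¹ := by
    rw [hs_def, ← rpow_mul hx.le, ← rpow_neg hx.le, hneg, div_neg, mul_comm, mul_one_div]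
  have ht : (q - 1) ^ ((q - 1) / (2 - q)) = s ^ q / s := by
    rw [← rpow_sub_one hs.ne', hs_def, ← rpow_mul hx.le, mul_comm, mul_one_div]
  have hbase : (1 + s⁻¹) ^ q = (1 + s) ^ q / s ^ q := by
    rw [← div_rpow (by positivity) hs.le]; congr 1; field_simp; ring
  have hsq : 0 < s ^ q := rpow_pos_of_pos hs _
  have h1s : 0 < (1 + s) ^ q := rpow_pos_of_pos (by positivity) _
  rw [hr, hrq, ht, hbase, kRight]
  congr 2
  field_simp
  ring

lemma kfun_eq_kRight {p : ℝ} (hp : 2 < p) :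
    kfun p = kRight (pconj p) ((pconj p - 1) ^ (1 / (2 - pconj p)))
      ((pconj p - 1) ^ ((pconj p - 1) / (2 - pconj p))) := by
  rw [kfun, if_neg (by linarith), if_neg (by linarith),
    eq_kRight_of_one_lt (one_lt_pconj (by linarith))]

lemma tendsto_log_sub_one_div_sub_two :
    Tendsto (fun q : ℝ => log (q - 1) / (q - 2)) (𝓝[≠] 2) (𝓝 1) := by
  have hderiv : HasDerivAt (fun q => log (q - 1)) 1 (2 : ℝ) := by
    have h := ((hasDerivAt_id (2 : ℝ)).sub_const 1).log (by norm_num)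
    norm_num at h
    exact h
  refine (hasDerivAt_iff_tendsto_slope.mp hderiv).congr fun q => ?_
  rw [slope_def_field]
  norm_num

lemma tendsto_sub_one_rpow_div_two_sub {c : ℝ → ℝ} {c₀ : ℝ}
    (hc : Tendsto c (𝓝[≠] 2) (𝓝 c₀)) :
    Tendsto (fun q : ℝ => (q - 1) ^ (c q / (2 - q))) (𝓝[≠] 2) (𝓝 (exp (-c₀))) := by
  have hexp := (continuous_exp.tendsto _).comp ((tendsto_log_sub_one_div_sub_two.mul hc).neg)
  rw [one_mul] at hexp
  refine hexp.congr' ?_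
  filter_upwards [nhdsWithin_le_nhds (Ioi_mem_nhds one_lt_two)] with q (hq : 1 < q)
  rw [Function.comp_apply, rpow_def_of_pos (sub_pos.mpr hq)]
  congr 1
  have hneg : q - 2 = -(2 - q) := by ring
  rw [hneg, div_neg]
  ring

lemma tendsto_sub_one_rpow_one_div_two_sub_nhds_one :
    Tendsto (fun q : ℝ => (q - 1) ^ (1 / (2 - q))) (𝓝 1) (𝓝 0) := by
  have hexp : Tendsto (fun q : ℝ => 1 / (2 - q)) (𝓝 1) (𝓝 1) := by
    have h : ContinuousAt (fun q : ℝ => 1 / (2 - q)) 1 := by fun_prop (disch := norm_num)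
    convert h.tendsto
    norm_num
  simpa using tendsto_sub_one_nhds_one.rpow hexp (Or.inr one_pos)

lemma tendsto_sub_one_rpow_sub_one_div_two_sub_nhdsGT_one :
    Tendsto (fun q : ℝ => (q - 1) ^ ((q - 1) / (2 - q))) (𝓝[>] 1) (𝓝 1) := by
  have hmul : Tendsto (fun q : ℝ => (q - 1) * log (q - 1) / (2 - q)) (𝓝 1) (𝓝 0) := by
    have h := (continuous_mul_log.continuousAt (x := 0)).tendsto.comp tendsto_sub_one_nhds_one
    have h2 := h.div ((tendsto_id (x := 𝓝 (1 : ℝ))).const_sub 2) (by norm_num)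
    simp only [zero_mul, zero_div] at h2
    exact h2
  have hexp := ((continuous_exp.tendsto _).comp hmul).mono_left (nhdsWithin_le_nhds (s := Ioi 1))
  rw [exp_zero] at hexp
  refine hexp.congr' ?_
  filter_upwards [self_mem_nhdsWithin] with q (hq : 1 < q)
  rw [Function.comp_apply, rpow_def_of_pos (sub_pos.mpr hq)]
  ring_nf

lemma tendsto_kfun_nhdsGT_two : Tendsto kfun (𝓝[>] 2) (𝓝 1) := by
  have hq : Tendsto pconj (𝓝[>] 2) (𝓝[≠] 2) :=
    tendsto_pconj_nhdsGT_two.mono_right (nhdsWithin_mono _ fun _ h => ne_of_lt h)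
  have hs := (tendsto_sub_one_rpow_div_two_sub (tendsto_const_nhds (x := 1))).comp hq
  have ht := (tendsto_sub_one_rpow_div_two_sub
    (((continuous_sub_right 1).tendsto' 2 1 (by norm_num)).mono_left nhdsWithin_le_nhds)).comp hq
  have h := (hq.mono_right nhdsWithin_le_nhds).kRight hs ht one_le_two (exp_pos _).le (exp_pos _)
  rw [kRight_two_self (exp_pos _).le] at h
  refine h.congr' ?_
  filter_upwards [self_mem_nhdsWithin] with p hp
  exact (kfun_eq_kRight hp).symm

lemma continuousAt_kfun_of_two_lt {p : ℝ} (hp : 2 < p) : ContinuousAt kfun p := by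
  have hq1 : 1 < pconj p := one_lt_pconj (by linarith)
  have hq : ContinuousAt pconj p := continuousAt_pconj (by linarith)
  have hx : 0 < pconj p - 1 := sub_pos.mpr hq1
  have hbase : ContinuousAt (fun p => pconj p - 1) p := hq.sub continuousAt_const
  have hexp : ContinuousAt (fun p => 2 - pconj p) p := continuousAt_const.sub hq
  have hne : 2 - pconj p ≠ 0 := (sub_pos.mpr (pconj_lt_two hp)).ne'
  have hs := hbase.rpow ((continuousAt_const (y := (1 : ℝ))).div hexp hne) (Or.inl hx.ne')
  have ht := hbase.rpow (hbase.div hexp hne) (Or.inl hx.ne')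
  have h : ContinuousAt (fun p => kRight (pconj p) ((pconj p - 1) ^ (1 / (2 - pconj p)))
      ((pconj p - 1) ^ ((pconj p - 1) / (2 - pconj p)))) p :=
    hq.tendsto.kRight hs.tendsto ht.tendsto hq1.le (rpow_pos_of_pos hx _).le (rpow_pos_of_pos hx _)
  refine h.congr ?_
  filter_upwards [Ioi_mem_nhds hp] with x hx
  exact (kfun_eq_kRight hx).symm

lemma tendsto_kfun_atTop : Tendsto kfun atTop (𝓝 (1 / 2)) := by
  have hq := tendsto_pconj_atTop
  have h := (hq.mono_right nhdsWithin_le_nhds).kRight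
    (tendsto_sub_one_rpow_one_div_two_sub_nhds_one.comp (hq.mono_right nhdsWithin_le_nhds))
    (tendsto_sub_one_rpow_sub_one_div_two_sub_nhdsGT_one.comp hq) le_rfl le_rfl one_pos
  rw [show kRight 1 0 1 = 1 / 2 by norm_num [kRight]] at h
  refine h.congr' ?_
  filter_upwards [eventually_gt_atTop 2] with p hp
  exact (kfun_eq_kRight hp).symm

lemma continuousOn_kfun : ContinuousOn kfun (Ioi 1) := by
  intro p (hp : 1 < p)
  refine ContinuousAt.continuousWithinAt ?_
  rcases lt_trichotomy p 2 with hp2 | rfl | hp2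
  · exact (continuousWithinAt_kfun_Iic hp hp2.le).continuousAt (Iic_mem_nhds hp2)
  · refine continuousAt_iff_continuous_left_right.mpr
      ⟨continuousWithinAt_kfun_Iic hp le_rfl, continuousWithinAt_Ioi_iff_Ici.mp ?_⟩
    rw [ContinuousWithinAt, kfun_of_le_two le_rfl, pconj_two]
    norm_num
    exact tendsto_kfun_nhdsGT_two
  · exact continuousAt_kfun_of_two_lt hp2

/-- Properties of `k`.
`k` is continuous on `(1,∞)`, `k(p) → 0` as `p → 1+` and `k(p) → 1/2` as `p → +∞`. -/
theorem stmt15 :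
    ContinuousOn kfun (Ioi (1 : ℝ)) ∧
    Tendsto kfun (nhdsWithin 1 (Ioi (1 : ℝ))) (nhds 0) ∧
    Tendsto kfun atTop (nhds (1 / 2 : ℝ)) :=
  ⟨continuousOn_kfun, tendsto_kfun_nhdsGT_one, tendsto_kfun_atTop⟩
end
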